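/- arXiv:2309.07806 — 4 statements merged into one kernel-verified Lean document; each statement's English description precedes it below -/
import Mathlib

section
/- Let K be a field. Every function f : Σ* → K computed by a finite-state weighted automaton over K is weakly guessable and weakly co-guessable, and hence strongly guessable and strongly co-guessable. -/
open scoped Classical

namespace LearnWA

variable {σ S : Type}

section Hankel

variable [Semiring S]

/-- The row of the Hankel matrix of `f` indexed by `v`: `⟨v⟩_w = f (v ++ w)`. -/
def row (f : List σ → S) (v : List σ) : List σ → S := fun w => f (v ++ w)

/-- The column of the Hankel matrix of `f` indexed by `v`: `[v]_w = f (w ++ v)`. -/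
def col (f : List σ → S) (v : List σ) : List σ → S := fun w => f (w ++ v)

/-- The right shift `x · u`, given by `(x · u)_w = x (u ++ w)`. -/
def shiftR (x : List σ → S) (u : List σ) : List σ → S := fun w => x (u ++ w)

/-- The left shift `u · x`, given by `(u · x)_w = x (w ++ u)`. -/
def shiftL (x : List σ → S) (u : List σ) : List σ → S := fun w => x (w ++ u)

/-- `x` is a finite left-linear combination of elements of `X`. -/
def LeftGenerated (X : Set (List σ → S)) (x : List σ → S) : Prop :=
  ∃ (F : Finset (List σ → S)) (c : (List σ → S) → S),
    ↑F ⊆ X ∧ ∀ w, x w = ∑ y ∈ F, c y * y w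

/-- `x` is a finite right-linear combination of elements of `X`. -/
def RightGenerated (X : Set (List σ → S)) (x : List σ → S) : Prop :=
  ∃ (F : Finset (List σ → S)) (c : (List σ → S) → S),
    ↑F ⊆ X ∧ ∀ w, x w = ∑ y ∈ F, y w * c y

def LeftClosed (X : Set (List σ → S)) : Prop :=
  ∀ x ∈ X, ∀ a : σ, LeftGenerated X (shiftR x [a])

def RightClosed (X : Set (List σ → S)) : Prop :=
  ∀ x ∈ X, ∀ a : σ, RightGenerated X (shiftL x [a])

/-- every row of the Hankel matrix of `f` is left-generated by `X`. -/
def RowGenerating (f : List σ → S) (X : Set (List σ → S)) : Prop :=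
  ∀ v : List σ, LeftGenerated X (row f v)

/-- every column of the Hankel matrix of `f` is right-generated by `X`. -/
def ColGenerating (f : List σ → S) (X : Set (List σ → S)) : Prop :=
  ∀ v : List σ, RightGenerated X (col f v)

/-- The left solution set `Λ_{Q,T}`. -/
def Lambda (f : List σ → S) (Q : Finset (List σ → S)) (T : Set (List σ)) :
    Set ((Q → S) × (Q → σ → Q → S)) :=
  { lam |
    (∀ t ∈ T, f t = ∑ q : Q, lam.1 q * (q : List σ → S) t) ∧
    ∀ (q : Q) (a : σ), ∀ t ∈ T,
      (q : List σ → S) (a :: t) = ∑ p : Q, lam.2 q a p * (p : List σ → S) t }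

/-- `Λ_{W,T}` for a finite set of words `W`: `Λ_{Q,T}` with `Q = {⟨w⟩ : w ∈ W}`. -/
noncomputable def LambdaW (f : List σ → S) (W : Finset (List σ)) (T : Set (List σ)) :=
  Lambda f (W.image (row f)) T

/-- The right solution set `Γ_{Q,T}` (here `T` is the finite set of vectors,
`Q ⊆ Σ*` the restriction set). -/
def Gamma (f : List σ → S) (T : Finset (List σ → S)) (Q : Set (List σ)) :
    Set ((T → S) × (T → σ → T → S)) :=
  { gam |
    (∀ u ∈ Q, f u = ∑ t : T, (t : List σ → S) u * gam.1 t) ∧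
    ∀ (t : T) (a : σ), ∀ u ∈ Q,
      (t : List σ → S) (u ++ [a]) = ∑ s : T, (s : List σ → S) u * gam.2 s a t }

/-- `Γ_{Q,W}` for a finite set of words `W`: `Γ_{Q,T}` with `T = {[w] : w ∈ W}`. -/
noncomputable def GammaW (f : List σ → S) (W : Finset (List σ)) (Q : Set (List σ)) :=
  Gamma f (W.image (col f)) Q

/-- `f` is weakly guessable: there is a finite (nonempty) set `Q` of rows of its Hankel
matrix with `Λ_Q ≠ ∅`. -/
def WeaklyGuessable (f : List σ → S) : Prop :=
  ∃ Q : Finset (List σ → S), Q.Nonempty ∧ (∀ q ∈ Q, ∃ w, q = row f w) ∧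
    (Lambda f Q Set.univ).Nonempty

/-- `f` is weakly co-guessable: there is a finite (nonempty) set `T` of columns of its
Hankel matrix with `Γ_T ≠ ∅`. -/
def WeaklyCoGuessable (f : List σ → S) : Prop :=
  ∃ T : Finset (List σ → S), T.Nonempty ∧ (∀ t ∈ T, ∃ w, t = col f w) ∧
    (Gamma f T Set.univ).Nonempty

/-- `f` is guessable: there are finite (nonempty) sets of words `Q, T` with
`Λ_{Q,T} = Λ_Q ≠ ∅`. -/
def Guessable (f : List σ → S) : Prop :=
  ∃ (Q T : Finset (List σ)), Q.Nonempty ∧ T.Nonempty ∧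
    LambdaW f Q ↑T = LambdaW f Q Set.univ ∧ (LambdaW f Q Set.univ).Nonempty

/-- `f` is co-guessable: there are finite (nonempty) sets of words `Q, T` with
`Γ_{Q,T} = Γ_T ≠ ∅`. -/
def CoGuessable (f : List σ → S) : Prop :=
  ∃ (Q T : Finset (List σ)), Q.Nonempty ∧ T.Nonempty ∧
    GammaW f T ↑Q = GammaW f T Set.univ ∧ (GammaW f T Set.univ).Nonempty

/-- `f` is strongly guessable: guessable, and for every finite (nonempty) set of words `Q`
there is a finite (nonempty) set of words `T` with `Λ_{Q,T} = Λ_Q`. -/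
def StronglyGuessable (f : List σ → S) : Prop :=
  Guessable f ∧ ∀ Q : Finset (List σ), Q.Nonempty →
    ∃ T : Finset (List σ), T.Nonempty ∧ LambdaW f Q ↑T = LambdaW f Q Set.univ

/-- `f` is strongly co-guessable. -/
def StronglyCoGuessable (f : List σ → S) : Prop :=
  CoGuessable f ∧ ∀ T : Finset (List σ), T.Nonempty →
    ∃ Q : Finset (List σ), Q.Nonempty ∧ GammaW f T ↑Q = GammaW f T Set.univ

/-- A total `Q`-chain: an infinite strictly descending chain
`Λ_{Q,T 0} ⊋ Λ_{Q,T 1} ⊋ ⋯` with `T i ⊆ T (i+1)` and every word in some `T i`. -/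
def TotalQChain (f : List σ → S) (Q : Finset (List σ)) (T : ℕ → Set (List σ)) : Prop :=
  (∀ i, T i ⊆ T (i + 1)) ∧ (∀ w : List σ, ∃ i, w ∈ T i) ∧
    ∀ i, LambdaW f Q (T (i + 1)) ⊂ LambdaW f Q (T i)

/-- `f` is row-bound: there is a finite (nonempty) set of words `Q` with `Λ_Q ≠ ∅`
and no total `Q`-chain. -/
def RowBound (f : List σ → S) : Prop :=
  ∃ Q : Finset (List σ), Q.Nonempty ∧ (LambdaW f Q Set.univ).Nonempty ∧
    ∀ T : ℕ → Set (List σ), ¬ TotalQChain f Q T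

/-- `f` is strongly row-bound: for every finite (nonempty) set of words `Q` there is
no total `Q`-chain. -/
def StronglyRowBound (f : List σ → S) : Prop :=
  ∀ Q : Finset (List σ), Q.Nonempty → ∀ T : ℕ → Set (List σ), ¬ TotalQChain f Q T

/-- `f` satisfies the weak ascending chain condition. -/
def WeakACC (f : List σ → S) : Prop :=
  ∀ X : ℕ → Submodule S (List σ → S),
    (∀ i, X i ≤ X (i + 1)) →
    (∀ i, ∃ R : Finset (List σ), X i = Submodule.span S (↑(R.image (row f)) : Set (List σ → S))) →
    (∀ v : List σ, ∃ i, row f v ∈ X i) →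
    ∃ n, ∀ m ≥ n, X m = X n

end Hankel

/-- The mirror of `f`. -/
def mirror (f : List σ → S) : List σ → S := fun w => f w.reverse

/-- A finite-state weighted automaton over the alphabet `σ` with weights in `S`. -/
structure WAuto (σ S : Type) where
  State : Type
  [instFintype : Fintype State]
  init : State → S
  trans : σ → State → State → S
  final : State → S

attribute [instance] WAuto.instFintype

variable [Semiring S]

/-- `A.run w q` is the value `(M(w) η)_q`, i.e. the value computed by `A` on `w` when
started at `q` with initial weight `1`. -/
def WAuto.run (A : WAuto σ S) : List σ → A.State → S
  | [], q => A.final q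
  | a :: w, q => ∑ p : A.State, A.trans a q p * WAuto.run A w p

/-- `A` computes `f`: for every word `w`, `f w = α M(w) η`. -/
def WAuto.Computes (A : WAuto σ S) (f : List σ → S) : Prop :=
  ∀ w : List σ, f w = ∑ q : A.State, A.init q * A.run w q

/-- The (Hankel/hypothesis) automaton `H_{Q,λ}` built from a solution `λ`. -/
def hypAut (f : List σ → S) (Q : Finset (List σ → S))
    (lam : (Q → S) × (Q → σ → Q → S)) : WAuto σ S where
  State := Q
  init := lam.1
  trans := fun a q p => lam.2 q a p
  final := fun q => (q : List σ → S) []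

/-- `A.IsRun p w l`: `l` is the list of states successively visited by a run of `A`
on the word `w` starting at `p` (all transitions used have nonzero weight). -/
def WAuto.IsRun (A : WAuto σ S) : A.State → List σ → List A.State → Prop
  | _, [], l => l = []
  | p, a :: w, l => ∃ q l', l = q :: l' ∧ A.trans a p q ≠ 0 ∧ WAuto.IsRun A q w l'

/-- all transitions along the run have weight `1`. -/
def WAuto.RunWeightsOne (A : WAuto σ S) : A.State → List σ → List A.State → Prop
  | _, [], _ => True
  | p, a :: w, l => ∃ q l', l = q :: l' ∧ A.trans a p q = 1 ∧ WAuto.RunWeightsOne A q w l'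

/-- `A` is literal: it has a unique initial state with weight `1`, and there is a
prefix-closed set of words `W` and a bijection `b` from the states onto `W` such that for
every state `q` there is a unique run from the initial state labelled `b q`, every
transition of this run has weight `1`, and the run terminates at `q`. -/
def WAuto.Literal (A : WAuto σ S) : Prop :=
  ∃ q0 : A.State, A.init q0 = 1 ∧ (∀ q, q ≠ q0 → A.init q = 0) ∧
    ∃ (W : Set (List σ)) (b : A.State → List σ),
      (∀ w ∈ W, ∀ u, u <+: w → u ∈ W) ∧
      Function.Injective b ∧ Set.range b = W ∧
      ∀ q : A.State,
        (∃! l : List A.State, A.IsRun q0 (b q) l) ∧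
        ∀ l : List A.State, A.IsRun q0 (b q) l →
          A.RunWeightsOne q0 (b q) l ∧ (q0 :: l).getLast (List.cons_ne_nil _ _) = q

end LearnWA

/-!
If `A` computes `f`, then `f (u ++ v) = (α M(u)) ⬝ (M(v) η)`: every row of the Hankel matrix
lies in the span of the finitely many functions `w ↦ (M(w) η)_q`, and every column in the span
of the functions `u ↦ (α M(u))_p`. So finitely many rows span all rows, and the coefficients
expressing `⟨ε⟩` and the shifts `⟨w a⟩` through them form an element of `Λ_Q`; dually for `Γ`.

Over a field and a finite alphabet, strong (co-)guessability comes for free: `Λ_{Q,T}` is the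
solution set of one batch of affine equations per word of `T`, all on the same
finite-dimensional space, and the descending chain condition lets finitely many batches cut
out the same set as all of them.
-/

theorem Submodule.exists_finset_inf_eq_iInf {R M ι : Type} [Semiring R] [AddCommMonoid M]
    [Module R M] [IsArtinian R M] [Nonempty ι] (S : ι → Submodule R M) :
    ∃ J : Finset ι, J.Nonempty ∧ J.inf S = ⨅ i, S i := by
  obtain ⟨_, ⟨J, hJne, rfl⟩, hmin⟩ := wellFounded_lt.has_min
    {N | ∃ J : Finset ι, J.Nonempty ∧ J.inf S = N} ⟨_, {Classical.arbitrary ι}, by simp, rfl⟩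
  refine ⟨J, hJne, le_antisymm (le_iInf fun i => ?_) (Finset.le_inf fun j _ => iInf_le S j)⟩
  have hins : (insert i J).inf S = J.inf S :=
    eq_of_le_of_not_lt (Finset.inf_mono (Finset.subset_insert i J))
      (hmin _ ⟨insert i J, Finset.insert_nonempty i J, rfl⟩)
  rw [← hins, Finset.inf_insert]
  exact inf_le_left

/-- Homogenize: `x` solves the system iff `(x, 1)` lies in the kernel of every
`(x, c) ↦ φ i x - c • b i`, and `V × K` is Artinian. -/
theorem exists_finset_forall_apply_eq_iff {K ι V W : Type} [Field K] [Nonempty ι]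
    [AddCommGroup V] [Module K V] [FiniteDimensional K V] [AddCommGroup W] [Module K W]
    (φ : ι → V →ₗ[K] W) (b : ι → W) :
    ∃ J : Finset ι, J.Nonempty ∧ ∀ x, (∀ j ∈ J, φ j x = b j) ↔ ∀ i, φ i x = b i := by
  let ψ : ι → V × K →ₗ[K] W := fun i =>
    φ i ∘ₗ LinearMap.fst K V K - (LinearMap.snd K V K).smulRight (b i)
  have hψ : ∀ i x, (x, (1 : K)) ∈ LinearMap.ker (ψ i) ↔ φ i x = b i := by
    intro i x
    simp [ψ, sub_eq_zero]
  obtain ⟨J, hJne, hJ⟩ := Submodule.exists_finset_inf_eq_iInf fun i => LinearMap.ker (ψ i)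
  refine ⟨J, hJne, fun x => ?_⟩
  have := congrArg (fun N => (x, (1 : K)) ∈ N) hJ
  simpa [Submodule.mem_finsetInf, Submodule.mem_iInf, hψ] using this

theorem exists_finset_forall_mem_span_image {K ι κ M : Type} [DivisionRing K] [AddCommGroup M]
    [Module K M] [Nonempty ι] [Finite κ] (g : ι → M) (h : κ → M)
    (hg : ∀ i, g i ∈ Submodule.span K (Set.range h)) :
    ∃ J : Finset ι, J.Nonempty ∧ ∀ i, g i ∈ Submodule.span K ↑(J.image g) := by
  have hfg : (Submodule.span K (Set.range g)).FG :=
    (Submodule.fg_span (Set.finite_range h)).of_le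
      (Submodule.span_le.2 (Set.range_subset_iff.2 hg))
  obtain ⟨s, hs, hspan⟩ := (Submodule.fg_span_iff_fg_span_finset_subset _).1 hfg
  rw [← Set.image_univ, Finset.subset_set_image_iff] at hs
  obtain ⟨J, -, rfl⟩ := hs
  refine ⟨insert (Classical.arbitrary ι) J, Finset.insert_nonempty _ _, fun i => ?_⟩
  refine Submodule.span_mono ?_ (hspan ▸ Submodule.subset_span (Set.mem_range_self i))
  exact Finset.coe_subset.2 (Finset.image_subset_image (Finset.subset_insert _ _))

theorem exists_fun_eq_sum_of_mem_span {S α : Type} [Semiring S] {Q : Finset (α → S)}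
    {x : α → S} (hx : x ∈ Submodule.span S ↑Q) :
    ∃ c : Q → S, ∀ w, x w = ∑ q : Q, c q * (q : α → S) w := by
  have hQ : (↑Q : Set (α → S)) = Set.range (Subtype.val : Q → α → S) :=
    Subtype.range_val_subtype.symm
  rw [hQ, Submodule.mem_span_range_iff_exists_fun] at hx
  obtain ⟨c, rfl⟩ := hx
  exact ⟨c, fun w => by simp [Finset.sum_apply]⟩

theorem exists_finset_image_eq {α β : Type} {g : α → β} {Q : Finset β}
    (hQ : ∀ q ∈ Q, ∃ a, q = g a) : ∃ W : Finset α, W.image g = Q := by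
  obtain ⟨W, -, hW⟩ := Finset.subset_set_image_iff.1 fun q hq =>
    ((hQ q hq).imp fun _ h => ⟨Set.mem_univ _, h.symm⟩ : q ∈ g '' Set.univ)
  exact ⟨W, hW⟩

namespace LearnWA

variable {σ : Type}

section Hankel

variable {S : Type} (f : List σ → S)

theorem col_nil : col f [] = f := funext fun w => congrArg f (List.append_nil w)

theorem shiftR_row (w u : List σ) : shiftR (row f w) u = row f (w ++ u) :=
  funext fun v => congrArg f (List.append_assoc w u v).symm

theorem shiftL_col (v u : List σ) : shiftL (col f v) u = col f (u ++ v) :=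
  funext fun w => congrArg f (List.append_assoc w u v)

theorem lambda_univ_nonempty_of_mem_span [Semiring S] {Q : Finset (List σ → S)}
    (hf : f ∈ Submodule.span S ↑Q)
    (hQ : ∀ q ∈ Q, ∀ a : σ, shiftR q [a] ∈ Submodule.span S ↑Q) :
    (Lambda f Q Set.univ).Nonempty := by
  obtain ⟨init, hinit⟩ := exists_fun_eq_sum_of_mem_span hf
  choose trans htrans using fun (q : Q) a => exists_fun_eq_sum_of_mem_span (hQ q q.2 a)
  exact ⟨(init, trans), fun t _ => hinit t, fun q a t _ => htrans q a t⟩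

theorem gamma_univ_nonempty_of_mem_span [CommSemiring S] {T : Finset (List σ → S)}
    (hf : f ∈ Submodule.span S ↑T)
    (hT : ∀ t ∈ T, ∀ a : σ, shiftL t [a] ∈ Submodule.span S ↑T) :
    (Gamma f T Set.univ).Nonempty := by
  obtain ⟨init, hinit⟩ := exists_fun_eq_sum_of_mem_span hf
  choose trans htrans using fun (t : T) a => exists_fun_eq_sum_of_mem_span (hT t t.2 a)
  refine ⟨(init, fun s a t => trans t a s), fun u _ => ?_, fun t a u _ => ?_⟩
  · exact (hinit u).trans (Finset.sum_congr rfl fun _ _ => mul_comm _ _)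
  · exact (htrans t a u).trans (Finset.sum_congr rfl fun _ _ => mul_comm _ _)

theorem lambdaW_univ_nonempty [Semiring S] {W : Finset (List σ)}
    (hW : ∀ v, row f v ∈ Submodule.span S ↑(W.image (row f))) :
    (LambdaW f W Set.univ).Nonempty := by
  refine lambda_univ_nonempty_of_mem_span f (hW []) fun q hq a => ?_
  obtain ⟨w, -, rfl⟩ := Finset.mem_image.1 hq
  rw [shiftR_row]
  exact hW _

theorem gammaW_univ_nonempty [CommSemiring S] {W : Finset (List σ)}
    (hW : ∀ v, col f v ∈ Submodule.span S ↑(W.image (col f))) :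
    (GammaW f W Set.univ).Nonempty := by
  refine gamma_univ_nonempty_of_mem_span f (by simpa only [col_nil] using hW []) fun t ht a => ?_
  obtain ⟨v, -, rfl⟩ := Finset.mem_image.1 ht
  rw [shiftL_col]
  exact hW _

end Hankel

section Solutions

variable {K : Type} [Field K] (f : List σ → K)

/-- The left-hand sides of the equations defining `Λ_{Q,{t}}`. -/
def lambdaEqns (Q : Finset (List σ → K)) (t : List σ) :
    (Q → K) × (Q → σ → Q → K) →ₗ[K] K × (Q → σ → K) where
  toFun lam := (∑ q : Q, lam.1 q * (q : List σ → K) t,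
    fun q a => ∑ p : Q, lam.2 q a p * (p : List σ → K) t)
  map_add' _ _ := by ext <;> simp [add_mul, Finset.sum_add_distrib]
  map_smul' _ _ := by ext <;> simp [mul_assoc, Finset.mul_sum]

theorem mem_lambda_iff (Q : Finset (List σ → K)) (T : Set (List σ))
    (lam : (Q → K) × (Q → σ → Q → K)) :
    lam ∈ Lambda f Q T ↔
      ∀ t ∈ T, lambdaEqns Q t lam = (f t, fun (q : Q) a => (q : List σ → K) (a :: t)) := by
  constructor
  · rintro ⟨hinit, htrans⟩ t ht
    exact Prod.ext (hinit t ht).symm (funext₂ fun q a => (htrans q a t ht).symm)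
  · intro h
    exact ⟨fun t ht => (congrArg Prod.fst (h t ht)).symm,
      fun q a t ht => (congrFun₂ (congrArg Prod.snd (h t ht)) q a).symm⟩

def gammaEqns (T : Finset (List σ → K)) (u : List σ) :
    (T → K) × (T → σ → T → K) →ₗ[K] K × (T → σ → K) where
  toFun gam := (∑ t : T, (t : List σ → K) u * gam.1 t,
    fun t a => ∑ s : T, (s : List σ → K) u * gam.2 s a t)
  map_add' _ _ := by ext <;> simp [mul_add, Finset.sum_add_distrib]
  map_smul' _ _ := by ext <;> simp [mul_left_comm, Finset.mul_sum]

theorem mem_gamma_iff (T : Finset (List σ → K)) (Q : Set (List σ))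
    (gam : (T → K) × (T → σ → T → K)) :
    gam ∈ Gamma f T Q ↔
      ∀ u ∈ Q, gammaEqns T u gam = (f u, fun (t : T) a => (t : List σ → K) (u ++ [a])) := by
  constructor
  · rintro ⟨hinit, htrans⟩ u hu
    exact Prod.ext (hinit u hu).symm (funext₂ fun t a => (htrans t a u hu).symm)
  · intro h
    exact ⟨fun u hu => (congrArg Prod.fst (h u hu)).symm,
      fun t a u hu => (congrFun₂ (congrArg Prod.snd (h u hu)) t a).symm⟩

variable [Finite σ]

theorem exists_finset_lambda_eq_univ (Q : Finset (List σ → K)) :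
    ∃ T : Finset (List σ), T.Nonempty ∧ Lambda f Q ↑T = Lambda f Q Set.univ := by
  obtain ⟨T, hTne, hT⟩ := exists_finset_forall_apply_eq_iff (lambdaEqns Q)
    fun t => (f t, fun (q : Q) a => (q : List σ → K) (a :: t))
  refine ⟨T, hTne, Set.ext fun lam => ?_⟩
  simpa only [mem_lambda_iff, Finset.mem_coe, Set.mem_univ, true_imp_iff] using hT lam

theorem exists_finset_gamma_eq_univ (T : Finset (List σ → K)) :
    ∃ Q : Finset (List σ), Q.Nonempty ∧ Gamma f T ↑Q = Gamma f T Set.univ := by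
  obtain ⟨Q, hQne, hQ⟩ := exists_finset_forall_apply_eq_iff (gammaEqns T)
    fun u => (f u, fun (t : T) a => (t : List σ → K) (u ++ [a]))
  refine ⟨Q, hQne, Set.ext fun gam => ?_⟩
  simpa only [mem_gamma_iff, Finset.mem_coe, Set.mem_univ, true_imp_iff] using hQ gam

end Solutions

section Automata

open Matrix

variable {S : Type} (A : WAuto σ S)

/-- `M(w) = M(w₁) ⋯ M(wₖ)`. -/
noncomputable def WAuto.wordMatrix [Semiring S] (w : List σ) : Matrix A.State A.State S :=
  (w.map fun a => Matrix.of (A.trans a)).prod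

theorem WAuto.run_eq_mulVec [Semiring S] (w : List σ) :
    A.run w = A.wordMatrix w *ᵥ A.final := by
  induction w with
  | nil => simp [WAuto.wordMatrix, WAuto.run]
  | cons a w ih =>
    funext q
    simp only [WAuto.run, WAuto.wordMatrix, List.map_cons, List.prod_cons, ← mulVec_mulVec]
    rw [← WAuto.wordMatrix, ← ih]
    rfl

theorem WAuto.run_append [Semiring S] (u v : List σ) :
    A.run (u ++ v) = A.wordMatrix u *ᵥ A.run v := by
  rw [A.run_eq_mulVec, A.run_eq_mulVec, WAuto.wordMatrix, List.map_append, List.prod_append,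
    ← mulVec_mulVec]
  rfl

variable {A} {f : List σ → S}

/-- The Hankel matrix of `f` factors through the state space of `A`. -/
theorem WAuto.Computes.apply_append [Semiring S] (hA : A.Computes f) (u v : List σ) :
    f (u ++ v) = (A.init ᵥ* A.wordMatrix u) ⬝ᵥ A.run v := by
  rw [hA, ← dotProduct_mulVec, ← A.run_append]
  rfl

theorem WAuto.Computes.row_mem_span [Semiring S] (hA : A.Computes f) (u : List σ) :
    row f u ∈ Submodule.span S (Set.range fun p w => A.run w p) := by
  refine (Submodule.mem_span_range_iff_exists_fun S).2 ⟨A.init ᵥ* A.wordMatrix u, ?_⟩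
  funext v
  simp [Finset.sum_apply, row, hA.apply_append, dotProduct]

theorem WAuto.Computes.col_mem_span [CommSemiring S] (hA : A.Computes f) (v : List σ) :
    col f v ∈ Submodule.span S (Set.range fun p u => (A.init ᵥ* A.wordMatrix u) p) := by
  refine (Submodule.mem_span_range_iff_exists_fun S).2 ⟨A.run v, ?_⟩
  funext u
  simp [Finset.sum_apply, col, hA.apply_append, dotProduct, mul_comm]

end Automata

section Guessability

variable {K : Type} [Field K] {f : List σ → K}

theorem WAuto.Computes.weaklyGuessable {A : WAuto σ K} (hA : A.Computes f) :
    WeaklyGuessable f := by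
  obtain ⟨W, hWne, hW⟩ := exists_finset_forall_mem_span_image _ _ hA.row_mem_span
  refine ⟨W.image (row f), hWne.image _, fun q hq => ?_, lambdaW_univ_nonempty f hW⟩
  obtain ⟨w, -, rfl⟩ := Finset.mem_image.1 hq
  exact ⟨w, rfl⟩

theorem WAuto.Computes.weaklyCoGuessable {A : WAuto σ K} (hA : A.Computes f) :
    WeaklyCoGuessable f := by
  obtain ⟨W, hWne, hW⟩ := exists_finset_forall_mem_span_image _ _ hA.col_mem_span
  refine ⟨W.image (col f), hWne.image _, fun t ht => ?_, gammaW_univ_nonempty f hW⟩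
  obtain ⟨w, -, rfl⟩ := Finset.mem_image.1 ht
  exact ⟨w, rfl⟩

variable [Finite σ]

theorem WeaklyGuessable.stronglyGuessable (hf : WeaklyGuessable f) : StronglyGuessable f := by
  obtain ⟨Q, hQne, hQrow, hΛ⟩ := hf
  obtain ⟨W, rfl⟩ := exists_finset_image_eq hQrow
  obtain ⟨T, hTne, hT⟩ := exists_finset_lambda_eq_univ f (W.image (row f))
  exact ⟨⟨W, T, Finset.image_nonempty.1 hQne, hTne, hT, hΛ⟩,
    fun Q _ => exists_finset_lambda_eq_univ f _⟩

theorem WeaklyCoGuessable.stronglyCoGuessable (hf : WeaklyCoGuessable f) :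
    StronglyCoGuessable f := by
  obtain ⟨T, hTne, hTcol, hΓ⟩ := hf
  obtain ⟨W, rfl⟩ := exists_finset_image_eq hTcol
  obtain ⟨Q, hQne, hQ⟩ := exists_finset_gamma_eq_univ f (W.image (col f))
  exact ⟨⟨Q, W, hQne, Finset.image_nonempty.1 hTne, hQ, hΓ⟩,
    fun T _ => exists_finset_gamma_eq_univ f _⟩

end Guessability

end LearnWA

open LearnWA

theorem statement16 {σ K : Type} [Fintype σ] [Field K] (f : List σ → K)
    (h : ∃ A : WAuto σ K, A.Computes f) :
    WeaklyGuessable f ∧ WeaklyCoGuessable f ∧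
      StronglyGuessable f ∧ StronglyCoGuessable f := by
  obtain ⟨A, hA⟩ := h
  exact ⟨hA.weaklyGuessable, hA.weaklyCoGuessable, hA.weaklyGuessable.stronglyGuessable,
    hA.weaklyCoGuessable.stronglyCoGuessable⟩
end

section
/- Let Σ = {a,b} and define f : Σ* → ℕ by f(a^n) = 2^n − 1 for every n ≥ 1 and f(w) = 0 for every word w not of the form a^n with n ≥ 1. Then f is computed by a finite-state weighted automaton over ℕ, but f is neither weakly guessable nor weakly co-guessable over ℕ. -/
open scoped Classical

open LearnWA

/-- Over the alphabet `Bool` (where `true` plays the role of the letter `a` and `false`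
that of `b`), the function with `f (a^n) = 2^n - 1` for `n ≥ 1` and `f w = 0` on every
other word. -/
def f17 : List Bool → ℕ := fun w =>
  if w ≠ [] ∧ ∀ x ∈ w, x = true then 2 ^ w.length - 1 else 0


namespace Aux17
open LearnWA

/-- The candidate nonzero rows/columns of the Hankel matrix of `f17`. -/
def g (n : ℕ) : List Bool → ℕ := fun t =>
  if ∀ x ∈ t, x = true then 2 ^ (n + t.length) - 1 else 0

lemma g_nil (n : ℕ) : g n [] = 2 ^ n - 1 := by simp [g]

lemma g_one (n : ℕ) : g n [true] = 2 ^ (n + 1) - 1 := by simp [g]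

lemma g_two (n : ℕ) : g n [true, true] = 2 ^ (n + 2) - 1 := by
  simp [g]

lemma f17_eq (w : List Bool) :
    f17 w = if ∀ x ∈ w, x = true then 2 ^ w.length - 1 else 0 := by
  unfold f17
  rcases eq_or_ne w [] with rfl | hw
  · simp
  · simp [hw]

lemma row_f17 (w : List Bool) :
    row f17 w = (fun _ => 0) ∨ ∃ n, row f17 w = g n := by
  by_cases h : false ∈ w
  · left
    funext t
    simp [row, f17_eq, List.forall_mem_append, h]
  · right
    refine ⟨w.length, funext fun t => ?_⟩
    by_cases ht : false ∈ t <;>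
      simp [row, f17_eq, g, List.forall_mem_append, h, ht]

lemma col_f17 (w : List Bool) :
    col f17 w = (fun _ => 0) ∨ ∃ n, col f17 w = g n := by
  by_cases h : false ∈ w
  · left
    funext t
    simp [col, f17_eq, List.forall_mem_append, h]
  · right
    refine ⟨w.length, funext fun t => ?_⟩
    by_cases ht : false ∈ t <;>
      simp [col, f17_eq, g, List.forall_mem_append, h, ht, Nat.add_comm]

lemma core (Q : Finset (List Bool → ℕ))
    (hcl : ∀ q ∈ Q, q = (fun _ => 0) ∨ ∃ n, q = g n)
    (m : ℕ) (hmax : ∀ p ∈ Q, ∀ j, p = g j → j ≤ m)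
    (c : {x // x ∈ Q} → ℕ)
    (h0 : 2 ^ (m + 1) - 1 = ∑ p : {x // x ∈ Q}, c p * (p : List Bool → ℕ) [])
    (h1 : 2 ^ (m + 2) - 1 = ∑ p : {x // x ∈ Q}, c p * (p : List Bool → ℕ) [true]) :
    False := by
  classical
  set e : {x // x ∈ Q} → ℕ :=
    fun p => if (p : List Bool → ℕ) = (fun _ => 0) then 0 else 1 with he
  have key : ∀ p : {x // x ∈ Q},
      (p : List Bool → ℕ) [true] = 2 * (p : List Bool → ℕ) [] + e p ∧
      (p : List Bool → ℕ) [] ≤ (2 ^ m - 1) * e p := by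
    intro p
    rcases hcl p p.2 with hz | ⟨j, hj⟩
    · simp [he, hz]
    · have hjm : j ≤ m := hmax p p.2 j hj
      have h1j : (1 : ℕ) ≤ 2 ^ j := Nat.one_le_two_pow
      have hpsj : (2 : ℕ) ^ (j + 1) = 2 ^ j * 2 := pow_succ 2 j
      have hne : (p : List Bool → ℕ) ≠ fun _ => 0 := by
        intro hz
        have h2 : (2 : ℕ) ^ (j + 1) - 1 = 0 := by
          have h3 := congrFun hz [true]
          rwa [hj, g_one] at h3
        omega
      have hep : e p = 1 := by simp [he, hne]
      refine ⟨?_, ?_⟩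
      · rw [hj, g_one, g_nil, hep]; omega
      · rw [hj, g_nil, hep, mul_one]
        have hle : (2 : ℕ) ^ j ≤ 2 ^ m := Nat.pow_le_pow_right (by norm_num) hjm
        omega
  have hsum1 : ∑ p : {x // x ∈ Q}, c p * (p : List Bool → ℕ) [true]
      = 2 * (∑ p : {x // x ∈ Q}, c p * (p : List Bool → ℕ) [])
        + ∑ p : {x // x ∈ Q}, c p * e p := by
    calc ∑ p : {x // x ∈ Q}, c p * (p : List Bool → ℕ) [true]
        = ∑ p : {x // x ∈ Q},
            (2 * (c p * (p : List Bool → ℕ) []) + c p * e p) := by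
          refine Finset.sum_congr rfl fun p _ => ?_
          rw [(key p).1]; ring
      _ = _ := by rw [Finset.sum_add_distrib, Finset.mul_sum]
  have hE : ∑ p : {x // x ∈ Q}, c p * e p = 1 := by
    have hp1 : (1 : ℕ) ≤ 2 ^ (m + 1) := Nat.one_le_two_pow
    have hps : (2 : ℕ) ^ (m + 2) = 2 ^ (m + 1) * 2 := pow_succ 2 (m + 1)
    omega
  have hle : (∑ p : {x // x ∈ Q}, c p * (p : List Bool → ℕ) [])
      ≤ (2 ^ m - 1) * ∑ p : {x // x ∈ Q}, c p * e p := by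
    rw [Finset.mul_sum]
    refine Finset.sum_le_sum fun p _ => ?_
    calc c p * (p : List Bool → ℕ) [] ≤ c p * ((2 ^ m - 1) * e p) :=
          Nat.mul_le_mul_left _ (key p).2
      _ = (2 ^ m - 1) * (c p * e p) := by ring
  rw [hE, mul_one] at hle
  have hp1 : (1 : ℕ) ≤ 2 ^ m := Nat.one_le_two_pow
  have hps : (2 : ℕ) ^ (m + 1) = 2 ^ m * 2 := pow_succ 2 m
  omega

/-- The 2-state automaton computing `f17`. -/
def A17 : WAuto Bool ℕ where
  State := Bool
  init := fun q => if q then 0 else 1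
  trans := fun a p q =>
    if a then (if p then (if q then 2 else 0) else 1) else 0
  final := fun q => if q then 1 else 0

lemma A17_run (w : List Bool) :
    (A17.run w false = if ∀ x ∈ w, x = true then 2 ^ w.length - 1 else 0) ∧
    (A17.run w true = if ∀ x ∈ w, x = true then 2 ^ w.length else 0) := by
  induction w with
  | nil => simp [WAuto.run, A17]
  | cons a w ih =>
    have hsum : ∀ q : Bool, A17.run (a :: w) q
        = A17.trans a q false * A17.run w false + A17.trans a q true * A17.run w true := by
      intro q
      show (∑ p : Bool, A17.trans a q p * A17.run w p) = _
      rw [Fintype.sum_bool]; ring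
    have h1 : (1 : ℕ) ≤ 2 ^ w.length := Nat.one_le_two_pow
    obtain ⟨ih1, ih2⟩ := ih
    cases a
    · refine ⟨?_, ?_⟩ <;> · rw [hsum]; simp [A17]
    · refine ⟨?_, ?_⟩ <;>
      · rw [hsum, ih1, ih2]
        by_cases hw : false ∈ w <;>
          simp [A17, hw, pow_succ] <;> omega

lemma A17_computes : A17.Computes f17 := by
  intro w
  show f17 w = ∑ q : Bool, A17.init q * A17.run w q
  rw [Fintype.sum_bool, f17_eq, (A17_run w).1]
  simp [A17]

theorem not_wg : ¬ WeaklyGuessable f17 := by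
  rintro ⟨Q, hne, hrows, lam, hlam1, hlam2⟩
  have hcl : ∀ q ∈ Q, q = (fun _ => 0) ∨ ∃ n, q = g n := by
    intro q hq
    obtain ⟨w, rfl⟩ := hrows q hq
    exact row_f17 w
  have h1 : (1 : ℕ) = ∑ q : {x // x ∈ Q}, lam.1 q * (q : List Bool → ℕ) [true] := by
    have h := hlam1 [true] (Set.mem_univ _)
    rw [f17_eq] at h
    simpa using h
  have hex : ∃ q : {x // x ∈ Q}, (q : List Bool → ℕ) [true] ≠ 0 := by
    by_contra hno
    push_neg at hno
    rw [Finset.sum_eq_zero (fun q _ => by rw [hno q, mul_zero])] at h1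
    exact Nat.one_ne_zero h1
  obtain ⟨q0, hq0⟩ := hex
  obtain ⟨qs, hqs, hqsmax⟩ := Finset.exists_max_image Q (fun q => q [true]) hne
  have hqsne : qs ≠ (fun _ => 0) := by
    intro hz
    have h2 := hqsmax q0 q0.2
    rw [hz] at h2
    exact hq0 (Nat.le_zero.mp h2)
  obtain ⟨m, hm⟩ : ∃ m, qs = g m := (hcl qs hqs).resolve_left hqsne
  have hmax : ∀ p ∈ Q, ∀ j, p = g j → j ≤ m := by
    intro p hp j hj
    have h2 := hqsmax p hp
    rw [hj, hm, g_one, g_one] at h2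
    have h1j : (1 : ℕ) ≤ 2 ^ (j + 1) := Nat.one_le_two_pow
    have h1m : (1 : ℕ) ≤ 2 ^ (m + 1) := Nat.one_le_two_pow
    have hle : (2 : ℕ) ^ (j + 1) ≤ 2 ^ (m + 1) := by omega
    have := (Nat.pow_le_pow_iff_right (by norm_num : 1 < 2)).mp hle
    omega
  have e0 := hlam2 ⟨qs, hqs⟩ true [] (Set.mem_univ _)
  have e1 := hlam2 ⟨qs, hqs⟩ true [true] (Set.mem_univ _)
  have hv0 : (⟨qs, hqs⟩ : {x // x ∈ Q}).val (true :: ([] : List Bool)) = 2 ^ (m + 1) - 1 := by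
    show qs [true] = _
    rw [hm, g_one]
  have hv1 : (⟨qs, hqs⟩ : {x // x ∈ Q}).val (true :: [true]) = 2 ^ (m + 2) - 1 := by
    show qs [true, true] = _
    rw [hm, g_two]
  rw [hv0] at e0
  rw [hv1] at e1
  exact core Q hcl m hmax (lam.2 ⟨qs, hqs⟩ true) e0 e1

theorem not_wcg : ¬ WeaklyCoGuessable f17 := by
  rintro ⟨T, hne, hcols, gam, hgam1, hgam2⟩
  have hcl : ∀ t ∈ T, t = (fun _ => 0) ∨ ∃ n, t = g n := by
    intro t ht
    obtain ⟨w, rfl⟩ := hcols t ht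
    exact col_f17 w
  have h1 : (1 : ℕ) = ∑ t : {x // x ∈ T}, (t : List Bool → ℕ) [true] * gam.1 t := by
    have h := hgam1 [true] (Set.mem_univ _)
    rw [f17_eq] at h
    simpa using h
  have hex : ∃ t : {x // x ∈ T}, (t : List Bool → ℕ) [true] ≠ 0 := by
    by_contra hno
    push_neg at hno
    rw [Finset.sum_eq_zero (fun t _ => by rw [hno t, zero_mul])] at h1
    exact Nat.one_ne_zero h1
  obtain ⟨t0, ht0⟩ := hex
  obtain ⟨ts, hts, htsmax⟩ := Finset.exists_max_image T (fun t => t [true]) hne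
  have htsne : ts ≠ (fun _ => 0) := by
    intro hz
    have h2 := htsmax t0 t0.2
    rw [hz] at h2
    exact ht0 (Nat.le_zero.mp h2)
  obtain ⟨m, hm⟩ : ∃ m, ts = g m := (hcl ts hts).resolve_left htsne
  have hmax : ∀ p ∈ T, ∀ j, p = g j → j ≤ m := by
    intro p hp j hj
    have h2 := htsmax p hp
    rw [hj, hm, g_one, g_one] at h2
    have h1j : (1 : ℕ) ≤ 2 ^ (j + 1) := Nat.one_le_two_pow
    have h1m : (1 : ℕ) ≤ 2 ^ (m + 1) := Nat.one_le_two_pow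
    have hle : (2 : ℕ) ^ (j + 1) ≤ 2 ^ (m + 1) := by omega
    have := (Nat.pow_le_pow_iff_right (by norm_num : 1 < 2)).mp hle
    omega
  have e0 := hgam2 ⟨ts, hts⟩ true [] (Set.mem_univ _)
  have e1 := hgam2 ⟨ts, hts⟩ true [true] (Set.mem_univ _)
  have hv0 : (⟨ts, hts⟩ : {x // x ∈ T}).val (([] : List Bool) ++ [true]) = 2 ^ (m + 1) - 1 := by
    show ts [true] = _
    rw [hm, g_one]
  have hv1 : (⟨ts, hts⟩ : {x // x ∈ T}).val ([true] ++ [true]) = 2 ^ (m + 2) - 1 := by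
    show ts [true, true] = _
    rw [hm, g_two]
  rw [hv0] at e0
  rw [hv1] at e1
  refine core T hcl m hmax (fun s => gam.2 s true ⟨ts, hts⟩) ?_ ?_
  · rw [e0]
    exact Finset.sum_congr rfl fun s _ => mul_comm _ _
  · rw [e1]
    exact Finset.sum_congr rfl fun s _ => mul_comm _ _

end Aux17

theorem statement17 :
    (∃ A : WAuto Bool ℕ, A.Computes f17) ∧
      ¬ WeaklyGuessable f17 ∧ ¬ WeaklyCoGuessable f17 := by
  exact ⟨⟨Aux17.A17, Aux17.A17_computes⟩, Aux17.not_wg, Aux17.not_wcg⟩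
end

section
/- Let Σ = {a,b} and define f : Σ* → ℕ by f(ε) = 0, f(w) = 2^{|w|_a} if w begins with the letter a, and f(w) = 2^{|w|_b} if w begins with the letter b, where |w|_x denotes the number of occurrences of the letter x in w. Then f is strongly guessable but not weakly co-guessable over ℕ. -/
open scoped Classical

open LearnWA

/-- Over the alphabet `Bool` (where `true` plays the role of the letter `a` and `false`
that of `b`): `f ε = 0`, `f w = 2 ^ |w|_a` if `w` starts with `a`, and `f w = 2 ^ |w|_b`
if `w` starts with `b`. -/
def f18 : List Bool → ℕ
  | [] => 0
  | (x :: w) => 2 ^ ((x :: w).count x)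


namespace Ex18

/-- `2 ^ (count of true)`. -/
def ga (w : List Bool) : ℕ := 2 ^ w.count true
/-- `2 ^ (count of false)`. -/
def gb (w : List Bool) : ℕ := 2 ^ w.count false

lemma f18_cons (x : Bool) (w : List Bool) : f18 (x :: w) = 2 * 2 ^ (w.count x) := by
  show 2 ^ ((x :: w).count x) = 2 * 2 ^ (w.count x)
  rw [List.count_cons_self, pow_succ, mul_comm]

def IsCombo (x : List Bool → ℕ) : Prop :=
  ∃ α β γ : ℕ, ∀ t, x t = α * f18 t + β * ga t + γ * gb t

def T4 : Finset (List Bool) := {[true], [true, true], [false], [false, false]}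

lemma sep {x y : List Bool → ℕ} (hx : IsCombo x) (hy : IsCombo y)
    (h : ∀ t ∈ (↑T4 : Set (List Bool)), x t = y t) : ∀ t, x t = y t := by
  obtain ⟨α, β, γ, hx⟩ := hx
  obtain ⟨α', β', γ', hy⟩ := hy
  have m1 : [true] ∈ (↑T4 : Set (List Bool)) := by simp [T4]
  have m2 : [true, true] ∈ (↑T4 : Set (List Bool)) := by simp [T4]
  have m3 : [false] ∈ (↑T4 : Set (List Bool)) := by simp [T4]
  have m4 : [false, false] ∈ (↑T4 : Set (List Bool)) := by simp [T4]
  have e1 := h _ m1; have e2 := h _ m2; have e3 := h _ m3; have e4 := h _ m4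
  rw [hx, hy] at e1 e2 e3 e4
  have v1 : f18 [true] = 2 := by decide
  have v2 : ga [true] = 2 := by decide
  have v3 : gb [true] = 1 := by decide
  have v4 : f18 [true, true] = 4 := by decide
  have v5 : ga [true, true] = 4 := by decide
  have v6 : gb [true, true] = 1 := by decide
  have v7 : f18 [false] = 2 := by decide
  have v8 : ga [false] = 1 := by decide
  have v9 : gb [false] = 2 := by decide
  have v10 : f18 [false, false] = 4 := by decide
  have v11 : ga [false, false] = 1 := by decide
  have v12 : gb [false, false] = 4 := by decide
  rw [v1, v2, v3] at e1; rw [v4, v5, v6] at e2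
  rw [v7, v8, v9] at e3; rw [v10, v11, v12] at e4
  have hα : α = α' := by omega
  have hβ : β = β' := by omega
  have hγ : γ = γ' := by omega
  intro t; rw [hx, hy, hα, hβ, hγ]

lemma rowCombo : ∀ v : List Bool, IsCombo (row f18 v)
  | [] => ⟨1, 0, 0, fun t => by simp [row]⟩
  | true :: u => ⟨0, 2 * 2 ^ (u.count true), 0, fun t => by
      simp only [row, List.cons_append, f18_cons, ga, List.count_append, pow_add]
      ring⟩
  | false :: u => ⟨0, 0, 2 * 2 ^ (u.count false), fun t => by
      simp only [row, List.cons_append, f18_cons, gb, List.count_append, pow_add]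
      ring⟩

lemma comboSum (Q' : Finset (List Bool → ℕ)) (hQ : ∀ q ∈ Q', IsCombo q)
    (c : {x // x ∈ Q'} → ℕ) :
    IsCombo (fun t => ∑ q : {x // x ∈ Q'}, c q * (q : List Bool → ℕ) t) := by
  choose α β γ h using fun q : {x // x ∈ Q'} => hQ q q.2
  refine ⟨∑ q, c q * α q, ∑ q, c q * β q, ∑ q, c q * γ q, fun t => ?_⟩
  rw [Finset.sum_mul, Finset.sum_mul, Finset.sum_mul, ← Finset.sum_add_distrib,
    ← Finset.sum_add_distrib]
  exact Finset.sum_congr rfl fun q _ => by rw [h q t]; ring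

lemma f18Combo : IsCombo f18 := ⟨1, 0, 0, fun t => by simp⟩

lemma lam_subset (Q : Finset (List Bool)) :
    LambdaW f18 Q (↑T4 : Set (List Bool)) ⊆ LambdaW f18 Q Set.univ := by
  rintro lam ⟨h1, h2⟩
  have hQ : ∀ q ∈ Q.image (row f18), IsCombo q := by
    intro q hq
    obtain ⟨v, -, rfl⟩ := Finset.mem_image.mp hq
    exact rowCombo v
  constructor
  · intro t _
    exact sep f18Combo (comboSum _ hQ lam.1) h1 t
  · intro q a t _
    obtain ⟨v, -, hv⟩ := Finset.mem_image.mp q.2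
    have hx : IsCombo (fun t => (q : List Bool → ℕ) (a :: t)) := by
      obtain ⟨A, B, C, hr⟩ := rowCombo (v ++ [a])
      refine ⟨A, B, C, fun t => ?_⟩
      have := hr t
      simp only [row, List.append_assoc, List.singleton_append] at this
      rw [← hv]
      simpa [row] using this
    exact sep hx (comboSum _ hQ (lam.2 q a)) (h2 q a) t

lemma lam_mono (Q : Finset (List Bool)) :
    LambdaW f18 Q Set.univ ⊆ LambdaW f18 Q (↑T4 : Set (List Bool)) := by
  rintro lam ⟨h1, h2⟩
  exact ⟨fun t _ => h1 t trivial, fun q a t _ => h2 q a t trivial⟩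

lemma lam_eq (Q : Finset (List Bool)) :
    LambdaW f18 Q (↑T4 : Set (List Bool)) = LambdaW f18 Q Set.univ :=
  Set.Subset.antisymm (lam_subset Q) (lam_mono Q)

def Q0 : Finset (List Bool) := {[], [true], [false]}

lemma sum_ind {Q' : Finset (List Bool → ℕ)} {x : List Bool → ℕ} (hx : x ∈ Q') (c : ℕ)
    (t : List Bool) :
    ∑ q : {y // y ∈ Q'}, (if (q : List Bool → ℕ) = x then c else 0) * (q : List Bool → ℕ) t
      = c * x t := by
  rw [Finset.sum_eq_single_of_mem (⟨x, hx⟩ : {y // y ∈ Q'}) (Finset.mem_univ _)]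
  · simp
  · intro b _ hb
    rw [if_neg (fun h => hb (Subtype.ext h)), zero_mul]

lemma row_ne_1 : row f18 ([] : List Bool) ≠ row f18 [true] := by
  intro h
  have := congrFun h []
  simp [row, f18] at this

lemma row_ne_2 : row f18 ([] : List Bool) ≠ row f18 [false] := by
  intro h
  have := congrFun h []
  simp [row, f18] at this

lemma row_ne_3 : row f18 [true] ≠ row f18 [false] := by
  intro h
  have := congrFun h [true]
  simp [row, f18] at this

lemma mem_r0 : row f18 ([] : List Bool) ∈ Q0.image (row f18) :=
  Finset.mem_image_of_mem _ (by simp [Q0])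

lemma mem_ra (a : Bool) : row f18 [a] ∈ Q0.image (row f18) :=
  Finset.mem_image_of_mem _ (by cases a <;> simp [Q0])

noncomputable def lam0 : ({x // x ∈ Q0.image (row f18)} → ℕ) ×
    ({x // x ∈ Q0.image (row f18)} → Bool → {x // x ∈ Q0.image (row f18)} → ℕ) :=
  ⟨fun q => if (q : List Bool → ℕ) = row f18 [] then 1 else 0,
   fun q a p =>
     if (q : List Bool → ℕ) = row f18 [] then
       (if (p : List Bool → ℕ) = row f18 [a] then 1 else 0)
     else if (q : List Bool → ℕ) = row f18 [a] then
       (if (p : List Bool → ℕ) = row f18 [a] then 2 else 0)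
     else (if (p : List Bool → ℕ) = (q : List Bool → ℕ) then 1 else 0)⟩

lemma lam0_mem : lam0 ∈ LambdaW f18 Q0 Set.univ := by
  constructor
  · intro t _
    show f18 t = ∑ q : {x // x ∈ Q0.image (row f18)},
      (if (q : List Bool → ℕ) = row f18 [] then 1 else 0) * (q : List Bool → ℕ) t
    rw [sum_ind mem_r0]
    simp [row]
  · intro q a t _
    obtain ⟨v, hvQ, hv⟩ := Finset.mem_image.mp q.2
    have hvQ' : v = [] ∨ v = [true] ∨ v = [false] := by
      simpa [Q0] using hvQ
    show (q : List Bool → ℕ) (a :: t) = ∑ p : {x // x ∈ Q0.image (row f18)},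
      (if (q : List Bool → ℕ) = row f18 [] then
        (if (p : List Bool → ℕ) = row f18 [a] then 1 else 0)
      else if (q : List Bool → ℕ) = row f18 [a] then
        (if (p : List Bool → ℕ) = row f18 [a] then 2 else 0)
      else (if (p : List Bool → ℕ) = (q : List Bool → ℕ) then 1 else 0)) *
        (p : List Bool → ℕ) t
    rcases hvQ' with rfl | rfl | rfl
    · simp only [← hv, eq_self_iff_true, if_true]
      rw [sum_ind (mem_ra a)]
      simp [row]
    · cases a
      · -- q = row [true], a = false : third branch
        have h1 : row f18 [true] ≠ row f18 ([] : List Bool) := row_ne_1.symm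
        have h2 : row f18 [true] ≠ row f18 [false] := row_ne_3
        simp only [← hv, if_neg h1, if_neg h2]
        rw [sum_ind (mem_ra true)]
        simp only [row, List.singleton_append, one_mul, f18_cons, List.count_cons,
          List.cons_append]
        norm_num
      · -- q = row [true], a = true : second branch
        have h1 : row f18 [true] ≠ row f18 ([] : List Bool) := row_ne_1.symm
        simp only [← hv, if_neg h1, eq_self_iff_true, if_true]
        rw [sum_ind (mem_ra true)]
        simp only [row, List.singleton_append, f18_cons, List.count_cons,
          List.cons_append]
        norm_num
        ring
    · cases a
      · -- q = row [false], a = false : second branch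
        have h1 : row f18 [false] ≠ row f18 ([] : List Bool) := row_ne_2.symm
        simp only [← hv, if_neg h1, eq_self_iff_true, if_true]
        rw [sum_ind (mem_ra false)]
        simp only [row, List.singleton_append, f18_cons, List.count_cons,
          List.cons_append]
        norm_num
        ring
      · -- q = row [false], a = true : third branch
        have h1 : row f18 [false] ≠ row f18 ([] : List Bool) := row_ne_2.symm
        have h2 : row f18 [false] ≠ row f18 [true] := row_ne_3.symm
        simp only [← hv, if_neg h1, if_neg h2]
        rw [sum_ind (mem_ra false)]
        simp only [row, List.singleton_append, one_mul, f18_cons, List.count_cons,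
          List.cons_append]
        norm_num

lemma sum_eq_one {ι : Type} {s : Finset ι} {g : ι → ℕ} (h : ∑ x ∈ s, g x = 1) :
    ∃ a ∈ s, g a = 1 ∧ ∀ b ∈ s, b ≠ a → g b = 0 := by
  by_cases hex : ∃ a ∈ s, g a ≠ 0
  · obtain ⟨a, ha, hga⟩ := hex
    have hs := Finset.add_sum_erase s g ha
    rw [h] at hs
    have h1 : g a = 1 := by omega
    have h2 : ∑ x ∈ s.erase a, g x = 0 := by omega
    refine ⟨a, ha, h1, fun b hb hba => ?_⟩
    exact (Finset.sum_eq_zero_iff.mp h2) b (Finset.mem_erase.mpr ⟨hba, hb⟩)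
  · push_neg at hex
    rw [Finset.sum_eq_zero hex] at h
    omega

lemma pow2_mul_eq_one {d g : ℕ} (h : 2 ^ d * g = 1) : d = 0 ∧ g = 1 := by
  cases d with
  | zero => simpa using h
  | succ n =>
    exfalso
    have h2 : (2 : ℕ) ∣ 1 := ⟨2 ^ n * g, by rw [← h, pow_succ]; ring⟩
    omega

lemma pow2_eq_one {c : ℕ} (h : (2 : ℕ) ^ c = 1) : c = 0 :=
  (pow2_mul_eq_one (g := 1) (by rw [h, mul_one])).1

lemma strongly_guessable : StronglyGuessable f18 := by
  constructor
  · exact ⟨Q0, T4, ⟨[], by simp [Q0]⟩, ⟨[true], by simp [T4]⟩, lam_eq Q0,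
      ⟨lam0, lam0_mem⟩⟩
  · exact fun Q _ => ⟨T4, ⟨[true], by simp [T4]⟩, lam_eq Q⟩

lemma not_weakly_coguessable : ¬ WeaklyCoGuessable f18 := by
  rintro ⟨T, -, hcols, γ, hγ1, hγ2⟩
  choose v hv using fun t : {x // x ∈ T} => hcols t t.2
  set c : {x // x ∈ T} → ℕ := fun t => (v t).count true with hc
  set d : {x // x ∈ T} → ℕ := fun t => (v t).count false with hd
  have valT : ∀ t : {x // x ∈ T}, (t : List Bool → ℕ) [true] = 2 * 2 ^ c t := by
    intro t
    rw [hv t]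
    show f18 ([true] ++ v t) = _
    rw [List.singleton_append, f18_cons]
  have valF : ∀ t : {x // x ∈ T}, (t : List Bool → ℕ) [false] = 2 * 2 ^ d t := by
    intro t
    rw [hv t]
    show f18 ([false] ++ v t) = _
    rw [List.singleton_append, f18_cons]
  have valFT : ∀ t : {x // x ∈ T}, (t : List Bool → ℕ) [false, true] = 2 * 2 ^ d t := by
    intro t
    rw [hv t]
    show f18 ([false, true] ++ v t) = _
    rw [show ([false, true] ++ v t) = false :: (true :: v t) from rfl, f18_cons]
    simp [hd, List.count_cons]
  have valTT : ∀ t : {x // x ∈ T}, (t : List Bool → ℕ) [true, true] = 4 * 2 ^ c t := by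
    intro t
    rw [hv t]
    show f18 ([true, true] ++ v t) = _
    rw [show ([true, true] ++ v t) = true :: (true :: v t) from rfl, f18_cons]
    rw [List.count_cons_self, pow_succ]
    ring
  -- key claim
  have key : ∀ k : ℕ, ∃ t : {x // x ∈ T}, c t = k ∧ d t = 0 := by
    intro k
    induction k with
    | zero =>
      have h1 := hγ1 [false] trivial
      have h2 := hγ1 [true] trivial
      have hf : f18 [false] = 2 := by decide
      have hft : f18 [true] = 2 := by decide
      rw [hf] at h1; rw [hft] at h2
      have h1' : ∑ t : {x // x ∈ T}, 2 ^ d t * γ.1 t = 1 := by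
        have : ∑ t : {x // x ∈ T}, (t : List Bool → ℕ) [false] * γ.1 t
            = 2 * ∑ t : {x // x ∈ T}, 2 ^ d t * γ.1 t := by
          rw [Finset.mul_sum]
          exact Finset.sum_congr rfl fun t _ => by rw [valF]; ring
        omega
      have h2' : ∑ t : {x // x ∈ T}, 2 ^ c t * γ.1 t = 1 := by
        have : ∑ t : {x // x ∈ T}, (t : List Bool → ℕ) [true] * γ.1 t
            = 2 * ∑ t : {x // x ∈ T}, 2 ^ c t * γ.1 t := by
          rw [Finset.mul_sum]
          exact Finset.sum_congr rfl fun t _ => by rw [valT]; ring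
        omega
      obtain ⟨t1, -, ht1, hzero⟩ := sum_eq_one h1'
      have hd0 : d t1 = 0 ∧ γ.1 t1 = 1 := pow2_mul_eq_one ht1
      have hc0 : c t1 = 0 := by
        rw [Finset.sum_eq_single_of_mem t1 (Finset.mem_univ _)] at h2'
        · rw [hd0.2, mul_one] at h2'
          exact pow2_eq_one h2'
        · intro b _ hb
          have hz := hzero b (Finset.mem_univ _) hb
          have hg : γ.1 b = 0 := by
            rcases Nat.mul_eq_zero.mp hz with h | h
            · exact absurd h (pow_ne_zero _ (by norm_num))
            · exact h
          rw [hg, mul_zero]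
      exact ⟨t1, hc0, hd0.1⟩
    | succ k ih =>
      obtain ⟨t, hct, hdt⟩ := ih
      have e1 := hγ2 t true [false] trivial
      have e2 := hγ2 t true [true] trivial
      rw [show ([false] ++ [true] : List Bool) = [false, true] from rfl, valFT, hdt] at e1
      rw [show ([true] ++ [true] : List Bool) = [true, true] from rfl, valTT, hct] at e2
      have e1' : ∑ s : {x // x ∈ T}, 2 ^ d s * γ.2 s true t = 1 := by
        have : ∑ s : {x // x ∈ T}, (s : List Bool → ℕ) [false] * γ.2 s true t
            = 2 * ∑ s : {x // x ∈ T}, 2 ^ d s * γ.2 s true t := by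
          rw [Finset.mul_sum]
          exact Finset.sum_congr rfl fun s _ => by rw [valF]; ring
        omega
      obtain ⟨s1, -, hs1, hzero⟩ := sum_eq_one e1'
      have hds : d s1 = 0 ∧ γ.2 s1 true t = 1 := pow2_mul_eq_one hs1
      have hcs : c s1 = k + 1 := by
        rw [Finset.sum_eq_single_of_mem s1 (Finset.mem_univ _)] at e2
        · rw [valT, hds.2, mul_one] at e2
          have h4 : (4 : ℕ) * 2 ^ k = 2 ^ (k + 2) := by rw [pow_add]; ring
          have h2 : (2 : ℕ) * 2 ^ c s1 = 2 ^ (c s1 + 1) := by rw [pow_succ]; ring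
          rw [h4, h2] at e2
          have := Nat.pow_right_injective (le_refl 2) e2
          omega
        · intro b _ hb
          have hz := hzero b (Finset.mem_univ _) hb
          have hg : γ.2 b true t = 0 := by
            rcases Nat.mul_eq_zero.mp hz with h | h
            · exact absurd h (pow_ne_zero _ (by norm_num))
            · exact h
          rw [hg, mul_zero]
      exact ⟨s1, hcs, hds.1⟩
  choose g hg1 hg2 using key
  have hinj : Function.Injective g := by
    intro k k' h
    have : c (g k) = c (g k') := by rw [h]
    rw [hg1, hg1] at this
    exact this
  obtain ⟨k, k', hne, heq⟩ := Finite.exists_ne_map_eq_of_infinite g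
  exact hne (hinj heq)

end Ex18

theorem statement18 :
    StronglyGuessable f18 ∧ ¬ WeaklyCoGuessable f18 :=
  ⟨Ex18.strongly_guessable, Ex18.not_weakly_coguessable⟩
end

section
/- Let Σ = {a,b} and define f : Σ* → ℝ≥0 (the semiring of non-negative real numbers with usual addition and multiplication) by f(ε) = 0, f(w) = 2^{|w|_a} if w begins with the letter a, and f(w) = 1 if w begins with the letter b, where |w|_a denotes the number of occurrences of the letter a in w. Then f is strongly guessable but not weakly co-guessable over ℝ≥0. -/
open scoped Classical

open LearnWA

/-- Over the alphabet `Bool` (where `true` plays the role of the letter `a` and `false`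
that of `b`) and the semiring `ℝ≥0` of non-negative reals: `f ε = 0`,
`f w = 2 ^ |w|_a` if `w` starts with `a`, and `f w = 1` if `w` starts with `b`. -/
noncomputable def f19 : List Bool → NNReal
  | [] => 0
  | (true :: w) => 2 ^ ((true :: w).count true)
  | (false :: _) => 1


noncomputable def g19 : List Bool → NNReal := fun w => 2 ^ w.count true

lemma f19_true (w : List Bool) : f19 (true :: w) = 2 * g19 w := by
  show (2:NNReal) ^ ((true :: w).count true) = _
  simp [g19, List.count_cons, pow_succ, mul_comm]

lemma f19_false (w : List Bool) : f19 (false :: w) = 1 := rfl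
lemma f19_nil : f19 [] = 0 := rfl
lemma g19_nil : g19 [] = 1 := rfl
lemma g19_true (w) : g19 (true :: w) = 2 * g19 w := by
  simp [g19, List.count_cons, pow_succ, mul_comm]
lemma g19_false (w) : g19 (false :: w) = g19 w := by
  simp [g19, List.count_cons]
lemma g19_append (u v : List Bool) : g19 (u ++ v) = g19 u * g19 v := by
  simp [g19, pow_add]
lemma g19_pos (w) : 0 < g19 w := by
  simp only [g19]; positivity

def InSpan19 (L : List Bool → NNReal) : Prop :=
  ∃ α β γ : NNReal, ∀ t, L t = α * f19 t + β * g19 t + γ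

lemma inSpan_row (w : List Bool) : InSpan19 (fun t => f19 (w ++ t)) := by
  match w with
  | [] => exact ⟨1, 0, 0, fun t => by simp⟩
  | true :: u => exact ⟨0, 2 * g19 u, 0, fun t => by
      simp only [List.cons_append, f19_true, g19_append]; ring⟩
  | false :: u => exact ⟨0, 0, 1, fun t => by simp [f19_false]⟩

lemma inSpan_sum {ι : Type*} [Fintype ι] (F : ι → List Bool → NNReal) (c : ι → NNReal)
    (h : ∀ i, InSpan19 (F i)) : InSpan19 (fun t => ∑ i, c i * F i t) := by
  choose A B C hABC using h
  refine ⟨∑ i, c i * A i, ∑ i, c i * B i, ∑ i, c i * C i, fun t => ?_⟩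
  simp only [hABC]
  rw [Finset.sum_mul, Finset.sum_mul, ← Finset.sum_add_distrib, ← Finset.sum_add_distrib]
  exact Finset.sum_congr rfl fun i _ => by ring

lemma span_ext {L R : List Bool → NNReal} (hL : InSpan19 L) (hR : InSpan19 R)
    (h0 : L [] = R []) (h1 : L [true] = R [true]) (h2 : L [false] = R [false]) :
    ∀ t, L t = R t := by
  obtain ⟨α, β, γ, hL⟩ := hL
  obtain ⟨α', β', γ', hR⟩ := hR
  have v0 : f19 [true] = 2 := by rw [f19_true, g19_nil]; ring
  have e0 : β + γ = β' + γ' := by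
    have := h0; rw [hL, hR, f19_nil, g19_nil] at this; simpa using this
  have e1 : 2*α + 2*β + γ = 2*α' + 2*β' + γ' := by
    have := h1; rw [hL, hR, v0] at this
    have g1 : g19 [true] = 2 := by rw [g19_true, g19_nil]; ring
    rw [g1] at this; ring_nf at this ⊢; linear_combination this
  have e2 : α + β + γ = α' + β' + γ' := by
    have := h2; rw [hL, hR, f19_false] at this
    have g2 : g19 [false] = 1 := by rw [g19_false, g19_nil]
    rw [g2] at this; ring_nf at this ⊢; linear_combination this
  have r0 : (β:ℝ) + γ = β' + γ' := by exact_mod_cast congrArg NNReal.toReal e0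
  have r1 : 2*(α:ℝ) + 2*β + γ = 2*α' + 2*β' + γ' := by exact_mod_cast congrArg NNReal.toReal e1
  have r2 : (α:ℝ) + β + γ = α' + β' + γ' := by exact_mod_cast congrArg NNReal.toReal e2
  have ha : α = α' := by
    have : (α:ℝ) = α' := by linarith
    exact_mod_cast this
  have hb : β = β' := by
    have : (β:ℝ) = β' := by linarith
    exact_mod_cast this
  have hc : γ = γ' := by
    have : (γ:ℝ) = γ' := by linarith
    exact_mod_cast this
  intro t; rw [hL, hR, ha, hb, hc]

def T3 : Finset (List Bool) := {[], [true], [false]}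

lemma lambda_eq (Q : Finset (List Bool)) :
    LambdaW f19 Q (↑T3) = LambdaW f19 Q Set.univ := by
  apply Set.Subset.antisymm
  · rintro lam ⟨h1, h2⟩
    have hmem : ∀ w : List Bool, w ∈ (↑T3 : Set (List Bool)) ↔ (w = [] ∨ w = [true] ∨ w = [false]) := by
      intro w; simp [T3]
    have hrow : ∀ q : ↑(Q.image (row f19)), InSpan19 (q : List Bool → NNReal) := by
      intro q
      obtain ⟨w, _, hw⟩ := Finset.mem_image.mp q.2
      exact hw ▸ inSpan_row w
    refine ⟨fun t _ => ?_, fun q a t _ => ?_⟩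
    · refine span_ext (L := f19)
        (R := fun t => ∑ p : ↑(Q.image (row f19)), lam.1 p * (p : List Bool → NNReal) t)
        ⟨1, 0, 0, fun t => by simp⟩ (inSpan_sum _ _ hrow) ?_ ?_ ?_ t
      · exact h1 [] (by simp [T3])
      · exact h1 [true] (by simp [T3])
      · exact h1 [false] (by simp [T3])
    · obtain ⟨w, _, hw⟩ := Finset.mem_image.mp q.2
      have hLspan : InSpan19 (fun t => (q : List Bool → NNReal) (a :: t)) := by
        have : (fun t => (q : List Bool → NNReal) (a :: t))
            = fun t => f19 ((w ++ [a]) ++ t) := by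
          funext t; rw [← hw]; show f19 (w ++ (a :: t)) = _; rw [List.append_cons]
        rw [this]; exact inSpan_row (w ++ [a])
      refine span_ext (L := fun t => (q : List Bool → NNReal) (a :: t))
        (R := fun t => ∑ p : ↑(Q.image (row f19)), lam.2 q a p * (p : List Bool → NNReal) t)
        hLspan (inSpan_sum _ _ hrow) ?_ ?_ ?_ t
      · exact h2 q a [] (by simp [T3])
      · exact h2 q a [true] (by simp [T3])
      · exact h2 q a [false] (by simp [T3])
  · rintro lam ⟨h1, h2⟩
    exact ⟨fun t _ => h1 t trivial, fun q a t _ => h2 q a t trivial⟩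

noncomputable def r0 : List Bool → NNReal := row f19 []
noncomputable def rT : List Bool → NNReal := row f19 [true]
noncomputable def rF : List Bool → NNReal := row f19 [false]

lemma r0_val (t) : r0 t = f19 t := rfl
lemma rT_val (t) : rT t = f19 (true :: t) := rfl
lemma rF_val (t) : rF t = f19 (false :: t) := rfl

lemma r0_ne_rT : r0 ≠ rT := by
  intro h
  have := congrFun h []
  rw [r0_val, rT_val, f19_nil, f19_true, g19_nil] at this
  simp at this
lemma r0_ne_rF : r0 ≠ rF := by
  intro h
  have := congrFun h []
  rw [r0_val, rF_val, f19_nil, f19_false] at this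
  simp at this
lemma rT_ne_rF : rT ≠ rF := by
  intro h
  have := congrFun h []
  rw [rT_val, rF_val, f19_true, f19_false, g19_nil, mul_one] at this
  norm_num at this

lemma r0_mem : r0 ∈ T3.image (row f19) := Finset.mem_image_of_mem _ (by simp [T3])
lemma rT_mem : rT ∈ T3.image (row f19) := Finset.mem_image_of_mem _ (by simp [T3])
lemma rF_mem : rF ∈ T3.image (row f19) := Finset.mem_image_of_mem _ (by simp [T3])

lemma rx_mem (a : Bool) : row f19 [a] ∈ T3.image (row f19) :=
  Finset.mem_image_of_mem _ (by cases a <;> simp [T3])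

lemma sum_if (r : List Bool → NNReal) (hm : r ∈ T3.image (row f19)) (c : NNReal)
    (t : List Bool) :
    (∑ p : ↑(T3.image (row f19)),
      (if (p : List Bool → NNReal) = r then c else 0) * (p : List Bool → NNReal) t)
      = c * r t := by
  rw [Fintype.sum_eq_single (⟨r, hm⟩ : ↑(T3.image (row f19)))]
  · simp
  · intro p hp
    rw [if_neg, zero_mul]
    intro h; exact hp (Subtype.ext h)

lemma lambda_nonempty : (LambdaW f19 T3 Set.univ).Nonempty := by
  refine ⟨⟨fun q => if (q : List Bool → NNReal) = r0 then 1 else 0,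
    fun q a p =>
      if (q : List Bool → NNReal) = r0 then
        (if (p : List Bool → NNReal) = row f19 [a] then 1 else 0)
      else if (q : List Bool → NNReal) = rT then
        (if (p : List Bool → NNReal) = rT then (if a then 2 else 1) else 0)
      else (if (p : List Bool → NNReal) = rF then 1 else 0)⟩,
    fun t _ => ?_, fun q a t _ => ?_⟩
  · rw [sum_if r0 r0_mem 1 t, one_mul, r0_val]
  · obtain ⟨w, hwT, hw⟩ := Finset.mem_image.mp q.2
    have hwT' : w = [] ∨ w = [true] ∨ w = [false] := by simpa [T3] using hwT
    rcases hwT' with rfl | rfl | rfl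
    · have hq : (q : List Bool → NNReal) = r0 := hw.symm
      simp only [hq, eq_self_iff_true, if_true]
      rw [sum_if (row f19 [a]) (rx_mem a) 1 t, one_mul]
      rfl
    · have hq : (q : List Bool → NNReal) = rT := hw.symm
      simp only [hq, if_neg (Ne.symm r0_ne_rT), eq_self_iff_true, if_true]
      rw [sum_if rT rT_mem _ t]
      cases a
      · simp only [Bool.false_eq_true, if_false, one_mul]
        rw [rT_val, rT_val, f19_true, f19_true, g19_false]
      · simp only [eq_self_iff_true, if_true]
        rw [rT_val, rT_val, f19_true, f19_true, g19_true]
    · have hq : (q : List Bool → NNReal) = rF := hw.symm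
      simp only [hq, if_neg (Ne.symm r0_ne_rF), if_neg (Ne.symm rT_ne_rF)]
      rw [sum_if rF rF_mem 1 t, one_mul]
      rw [rF_val, rF_val, f19_false, f19_false]

lemma not_weakly_cog : ¬ WeaklyCoGuessable f19 := by
  rintro ⟨T, hTne, hcols, gam, h1, h2⟩
  obtain ⟨t0, ht0T, ht0max⟩ := T.exists_max_image (fun s => s [true]) hTne
  have key : ∀ s ∈ T, s [false] = 1 ∧ s [true, true] = 2 * s [true] ∧ 0 < s [true] := by
    intro s hs
    obtain ⟨w, rfl⟩ := hcols s hs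
    refine ⟨rfl, ?_, ?_⟩
    · show f19 ([true, true] ++ w) = 2 * f19 ([true] ++ w)
      show f19 (true :: true :: w) = 2 * f19 (true :: w)
      rw [f19_true, f19_true, g19_true]
    · show 0 < f19 ([true] ++ w)
      show 0 < f19 (true :: w)
      rw [f19_true]
      have := g19_pos w
      positivity
  have hB := h2 ⟨t0, ht0T⟩ true [false] trivial
  have hA := h2 ⟨t0, ht0T⟩ true [true] trivial
  have hfalse : ∀ s : ↑T, (s : List Bool → NNReal) [false] = 1 := fun s => (key s s.2).1
  simp only [hfalse, one_mul] at hB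
  have ht0f : t0 [false, true] = 1 := by
    obtain ⟨w, rfl⟩ := hcols t0 ht0T
    rfl
  rw [show ([false] ++ [true] : List Bool) = [false, true] from rfl, ht0f] at hB
  have hle : (∑ s : ↑T, (s : List Bool → NNReal) [true] * gam.2 s true ⟨t0, ht0T⟩)
      ≤ t0 [true] := by
    calc (∑ s : ↑T, (s : List Bool → NNReal) [true] * gam.2 s true ⟨t0, ht0T⟩)
        ≤ ∑ s : ↑T, t0 [true] * gam.2 s true ⟨t0, ht0T⟩ := by
          refine Finset.sum_le_sum fun s _ => ?_
          exact mul_le_mul_left (ht0max s s.2) _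
      _ = t0 [true] * ∑ s : ↑T, gam.2 s true ⟨t0, ht0T⟩ := by rw [Finset.mul_sum]
      _ = t0 [true] := by rw [← hB, mul_one]
  have hA' : t0 [true, true]
      = ∑ s : ↑T, (s : List Bool → NNReal) [true] * gam.2 s true ⟨t0, ht0T⟩ := hA
  have h2x : 2 * t0 [true] ≤ t0 [true] := by
    rw [← (key t0 ht0T).2.1, hA']; exact hle
  have hpos := (key t0 ht0T).2.2
  have h2x' : 2 * (t0 [true] : ℝ) ≤ (t0 [true] : ℝ) := by exact_mod_cast h2x
  have hpos' : (0:ℝ) < (t0 [true] : ℝ) := hpos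
  linarith

theorem statement19 :
    StronglyGuessable f19 ∧ ¬ WeaklyCoGuessable f19 := by
  have hT3 : T3.Nonempty := ⟨[], by simp [T3]⟩
  exact ⟨⟨⟨T3, T3, hT3, hT3, lambda_eq T3, lambda_nonempty⟩,
    fun Q _ => ⟨T3, hT3, lambda_eq Q⟩⟩, not_weakly_cog⟩
end
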